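/- Let σ > 1 and 0 < t < 1 with t = xσ. Then A² := ∑_{i=0}^{n-1} t^{2i} - ∑_{i=0}^{n-1}∑_{j=0,j≠i}^{n-1} ρ^{|i-j|} t^{i+j} satisfies A² ≥ (1 - 2ρt/(1-ρt)) · (1 - t^{2n})/(1 - t²); in particular if additionally 3ρt < 1 then A² ≥ ((1-3ρt)/(1-ρt)) · (1 - t^{2n})/(1 - t²) > 0. -/

import Mathlib

/-!
Write `S = ∑ t^{2i}` and `O` for the off-diagonal sum. `O` is twice its part below the diagonal,
and for `j < i` the term `ρ^{i-j} t^{i+j}` equals `t^{2j} (ρt)^{i-j}`; so row `j` of that part is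
`t^{2j}` times a partial geometric tail in `ρt`, which is at most `ρt/(1-ρt)`. Hence
`O ≤ 2ρt/(1-ρt) · S`, and `S = (1-t^{2n})/(1-t²)` gives the bound. The second claim is the same
bound rewritten, since `1 - 2ρt/(1-ρt) = (1-3ρt)/(1-ρt)`.
-/

open Finset

theorem sum_offDiag_eq_two_nsmul_sum_lt {M : Type*} [AddCommMonoid M] (f : ℕ → ℕ → M)
    (hf : ∀ i j, f i j = f j i) (n : ℕ) :
    ∑ i ∈ range n, ∑ j ∈ range n, (if j ≠ i then f i j else 0)
      = 2 • ∑ j ∈ range n, ∑ i ∈ range n, (if j < i then f i j else 0) := by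
  have hsplit : ∀ i j, (if j ≠ i then f i j else 0)
      = (if i < j then f j i else 0) + (if j < i then f i j else 0) := by
    intro i j
    rcases lt_trichotomy i j with h | rfl | h
    · simp [h, h.ne', h.not_gt, hf i j]
    · simp
    · simp [h, h.ne, h.not_gt]
  simp only [hsplit, sum_add_distrib, two_smul]
  rw [sum_comm]

theorem pow_natAbs_sub_mul_pow_add_of_lt {M : Type*} [CommMonoid M] (ρ t : M) {i j : ℕ}
    (h : j < i) : ρ ^ ((i : ℤ) - j).natAbs * t ^ (i + j) = t ^ (2 * j) * (ρ * t) ^ (i - j) := by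
  obtain ⟨k, rfl⟩ := Nat.exists_eq_add_of_lt h
  rw [Int.natAbs_natCast_sub_natCast_of_ge h.le, Nat.add_assoc, add_tsub_cancel_left, mul_pow,
    show j + (k + 1) + j = 2 * j + (k + 1) by ring, pow_add t, mul_left_comm]

theorem sum_range_pow_two_mul {K : Type*} [Field K] (t : K) (ht : t ^ 2 ≠ 1) (n : ℕ) :
    ∑ i ∈ range n, t ^ (2 * i) = (1 - t ^ (2 * n)) / (1 - t ^ 2) := by
  simp only [pow_mul]
  rw [geom_sum_eq ht, ← neg_div_neg_eq, neg_sub, neg_sub]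

section OrderedField

variable {K : Type*} [Field K] [LinearOrder K] [IsStrictOrderedRing K]

theorem sum_range_pow_sub_le (r : K) (hr0 : 0 ≤ r) (hr1 : r < 1) (j n : ℕ) :
    ∑ i ∈ range n, (if j < i then r ^ (i - j) else 0) ≤ r / (1 - r) := by
  have hshift : (range n).filter (j < ·) = (Ico 1 (n - j)).map (addRightEmbedding j) := by
    ext i
    simp only [map_add_right_Ico, mem_filter, mem_range, mem_Ico]
    omega
  rw [← sum_filter, hshift, sum_map]
  simpa only [addRightEmbedding_apply, add_tsub_cancel_right, pow_one]
    using geom_sum_Ico_le_of_lt_one (m := 1) (n := n - j) hr0 hr1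

theorem sum_offDiag_pow_le (ρ t : K) (hρ : 0 ≤ ρ) (ht : 0 ≤ t) (hρt : ρ * t < 1) (n : ℕ) :
    ∑ i ∈ range n, ∑ j ∈ range n,
        (if j ≠ i then ρ ^ ((i : ℤ) - j).natAbs * t ^ (i + j) else 0)
      ≤ 2 * (ρ * t) / (1 - ρ * t) * ∑ i ∈ range n, t ^ (2 * i) := by
  have hsymm : ∀ i j : ℕ, ρ ^ ((i : ℤ) - j).natAbs * t ^ (i + j)
      = ρ ^ ((j : ℤ) - i).natAbs * t ^ (j + i) := by
    intro i j
    rw [← Int.natAbs_neg, neg_sub, add_comm]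
  have hrow : ∀ j, ∑ i ∈ range n, (if j < i then ρ ^ ((i : ℤ) - j).natAbs * t ^ (i + j) else 0)
      ≤ ρ * t / (1 - ρ * t) * t ^ (2 * j) := by
    intro j
    calc ∑ i ∈ range n, (if j < i then ρ ^ ((i : ℤ) - j).natAbs * t ^ (i + j) else 0)
        = t ^ (2 * j) * ∑ i ∈ range n, (if j < i then (ρ * t) ^ (i - j) else 0) := by
          rw [mul_sum]
          refine sum_congr rfl fun i _ => ?_
          split_ifs with h
          · exact pow_natAbs_sub_mul_pow_add_of_lt ρ t h
          · rw [mul_zero]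
      _ ≤ t ^ (2 * j) * (ρ * t / (1 - ρ * t)) := by
          gcongr
          exact sum_range_pow_sub_le _ (mul_nonneg hρ ht) hρt j n
      _ = ρ * t / (1 - ρ * t) * t ^ (2 * j) := mul_comm _ _
  rw [sum_offDiag_eq_two_nsmul_sum_lt _ hsymm, nsmul_eq_mul, Nat.cast_two, mul_div_assoc,
    mul_assoc]
  refine mul_le_mul_of_nonneg_left ?_ zero_le_two
  rw [mul_sum]
  exact sum_le_sum fun j _ => hrow j

end OrderedField

theorem A_sq_lower_bound_general (n : ℕ) (hn : 1 ≤ n) (t ρ : ℝ)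
    (ht0 : 0 < t) (ht1 : t < 1) (hρ0 : 0 < ρ) (hρ : ρ < 1 / 3) :
    ((∑ i ∈ Finset.range n, t ^ (2 * i))
        - ∑ i ∈ Finset.range n, ∑ j ∈ Finset.range n,
            (if j ≠ i then ρ ^ (((i : ℤ) - (j : ℤ)).natAbs) * t ^ (i + j) else 0))
      ≥ (1 - 2 * ρ * t / (1 - ρ * t)) * (1 - t ^ (2 * n)) / (1 - t ^ 2)
    ∧ (3 * ρ * t < 1 →
        ((∑ i ∈ Finset.range n, t ^ (2 * i))
            - ∑ i ∈ Finset.range n, ∑ j ∈ Finset.range n,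
                (if j ≠ i then ρ ^ (((i : ℤ) - (j : ℤ)).natAbs) * t ^ (i + j) else 0))
          ≥ ((1 - 3 * ρ * t) / (1 - ρ * t)) * (1 - t ^ (2 * n)) / (1 - t ^ 2)
        ∧ 0 < ((1 - 3 * ρ * t) / (1 - ρ * t)) * (1 - t ^ (2 * n)) / (1 - t ^ 2)) := by
  set S := ∑ i ∈ range n, t ^ (2 * i)
  set O := ∑ i ∈ range n, ∑ j ∈ range n,
    (if j ≠ i then ρ ^ (((i : ℤ) - (j : ℤ)).natAbs) * t ^ (i + j) else 0)
  have hρt : ρ * t < 1 := by nlinarith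
  have ht2 : t ^ 2 < 1 := pow_lt_one₀ ht0.le ht1 two_ne_zero
  have hgeom : S = (1 - t ^ (2 * n)) / (1 - t ^ 2) := sum_range_pow_two_mul t ht2.ne n
  have hoff : O ≤ 2 * (ρ * t) / (1 - ρ * t) * S := sum_offDiag_pow_le ρ t hρ0.le ht0.le hρt n
  have hlower : S - O ≥ (1 - 2 * ρ * t / (1 - ρ * t)) * (1 - t ^ (2 * n)) / (1 - t ^ 2) := by
    calc (1 - 2 * ρ * t / (1 - ρ * t)) * (1 - t ^ (2 * n)) / (1 - t ^ 2)
        = S - 2 * (ρ * t) / (1 - ρ * t) * S := by rw [hgeom]; ring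
      _ ≤ S - O := sub_le_sub_left hoff S
  refine ⟨hlower, fun h3 => ⟨?_, ?_⟩⟩
  · have hcoef : (1 - 3 * ρ * t) / (1 - ρ * t) = 1 - 2 * ρ * t / (1 - ρ * t) := by
      field_simp [(sub_pos.2 hρt).ne']
      ring
    rwa [hcoef]
  · have htn : t ^ (2 * n) < 1 := pow_lt_one₀ ht0.le ht1 (by omega)
    have hcoef_pos := div_pos (sub_pos.2 h3) (sub_pos.2 hρt)
    exact div_pos (mul_pos hcoef_pos (sub_pos.2 htn)) (sub_pos.2 ht2)

/-- lower bound for `A² = ∑ t^{2i} - ∑_{i≠j} ρ^{|i-j|} t^{i+j}`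
where `t = xσ`. -/
theorem A_sq_lower_bound (n : ℕ) (hn : 1 ≤ n) (σ x t ρ : ℝ) (hσ : 1 < σ)
    (htx : t = x * σ) (ht0 : 0 < t) (ht1 : t < 1) (hρ0 : 0 < ρ) (hρ : ρ < 1 / 3) :
    ((∑ i ∈ Finset.range n, t ^ (2 * i))
        - ∑ i ∈ Finset.range n, ∑ j ∈ Finset.range n,
            (if j ≠ i then ρ ^ (((i : ℤ) - (j : ℤ)).natAbs) * t ^ (i + j) else 0))
      ≥ (1 - 2 * ρ * t / (1 - ρ * t)) * (1 - t ^ (2 * n)) / (1 - t ^ 2)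
    ∧ (3 * ρ * t < 1 →
        ((∑ i ∈ Finset.range n, t ^ (2 * i))
            - ∑ i ∈ Finset.range n, ∑ j ∈ Finset.range n,
                (if j ≠ i then ρ ^ (((i : ℤ) - (j : ℤ)).natAbs) * t ^ (i + j) else 0))
          ≥ ((1 - 3 * ρ * t) / (1 - ρ * t)) * (1 - t ^ (2 * n)) / (1 - t ^ 2)
        ∧ 0 < ((1 - 3 * ρ * t) / (1 - ρ * t)) * (1 - t ^ (2 * n)) / (1 - t ^ 2)) :=
  A_sq_lower_bound_general n hn t ρ ht0 ht1 hρ0 hρ
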